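/- arXiv:math/0407024 — 2 statements merged into one kernel-verified Lean document; each statement's English description precedes it below -/
import Mathlib

section
/- Let c₁ ∈ (0, λ) and c₂ ∈ ℝ. The solution of the ODE f'' = (c₁² + c₂ φ² e^{2λt}) f with f(0) = 0, f'(0) = 1, expanded to second order in the parameter φ, is f(t) = f₀(t) + (φ²/2) f₂(t) + o(φ²), where f₀(t) = sinh(c₁ t)/c₁ and f₂(t) = (c₂ e^{λt}/(λ c₁ (λ² − c₁²))) · (λ sinh(c₁ t) cosh(λt) − c₁ cosh(c₁ t) sinh(λt)). Equivalently: f₀'' = c₁² f₀ with f₀(0)=0, f₀'(0)=1 has solution f₀(t) = sinh(c₁ t)/c₁, and f₂'' = c₁² f₂ + 2 c₂ e^{2λt} f₀ with f₂(0) = f₂'(0) = 0 has the stated solution f₂. -/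
/-!
Both claims are checked by differentiating the explicit formulas. The bracket in `f₂` is the
Wronskian `W = s₁ s₂' - s₁' s₂` of `s₁(t) = sinh (c₁ t)` and `s₂(t) = sinh (λ t)`, so
`W' = (λ² - c₁²) s₁ s₂`. Writing `f₂ = K e^{λt} W` then gives
`f₂'' - c₁² f₂ = K (λ² - c₁²) e^{λt} (W + 2λ s₁ s₂ + (s₁ s₂)') = 2λ K (λ² - c₁²) e^{2λt} s₁`,
because `W + (s₁ s₂)' = 2λ s₁ cosh (λ t)`.
-/

open Real

noncomputable def sinhWronskian (a b t : ℝ) : ℝ :=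
  b * sinh (a * t) * cosh (b * t) - a * cosh (a * t) * sinh (b * t)

lemma hasDerivAt_sinh_mul (a t : ℝ) :
    HasDerivAt (fun t => sinh (a * t)) (a * cosh (a * t)) t := by
  simpa [mul_comm] using ((hasDerivAt_id t).const_mul a).sinh

lemma hasDerivAt_cosh_mul (a t : ℝ) :
    HasDerivAt (fun t => cosh (a * t)) (a * sinh (a * t)) t := by
  simpa [mul_comm] using ((hasDerivAt_id t).const_mul a).cosh

lemma hasDerivAt_sinh_mul_mul_sinh_mul (a b t : ℝ) :
    HasDerivAt (fun t => sinh (a * t) * sinh (b * t))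
      (a * cosh (a * t) * sinh (b * t) + b * sinh (a * t) * cosh (b * t)) t :=
  ((hasDerivAt_sinh_mul a t).mul (hasDerivAt_sinh_mul b t)).congr_deriv (by ring)

lemma hasDerivAt_sinhWronskian (a b t : ℝ) :
    HasDerivAt (sinhWronskian a b) ((b ^ 2 - a ^ 2) * (sinh (a * t) * sinh (b * t))) t :=
  ((((hasDerivAt_sinh_mul a t).const_mul b).mul (hasDerivAt_cosh_mul b t)).sub
    (((hasDerivAt_cosh_mul a t).const_mul a).mul (hasDerivAt_sinh_mul b t))).congr_deriv
    (by ring)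

lemma hasDerivAt_exp_mul_mul {u : ℝ → ℝ} {u' t : ℝ} (b : ℝ) (hu : HasDerivAt u u' t) :
    HasDerivAt (fun t => exp (b * t) * u t) (exp (b * t) * (b * u t + u')) t :=
  (((hasDerivAt_id t).const_mul b).exp.mul hu).congr_deriv (by simp only [id, mul_one]; ring)

lemma deriv_deriv_eq_of_hasDerivAt {𝕜 E : Type*} [NontriviallyNormedField 𝕜]
    [NormedAddCommGroup E] [NormedSpace 𝕜 E] {f f' f'' : 𝕜 → E} (hf : ∀ t, HasDerivAt f (f' t) t)
    (hf' : ∀ t, HasDerivAt f' (f'' t) t) (t : 𝕜) : deriv (deriv f) t = f'' t := by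
  rw [show deriv f = f' from funext fun s => (hf s).deriv]
  exact (hf' t).deriv

lemma hasDerivAt_exp_mul_mul_sinhWronskian (a b t : ℝ) :
    HasDerivAt (fun t => exp (b * t) * sinhWronskian a b t)
      (exp (b * t) * (b * sinhWronskian a b t + (b ^ 2 - a ^ 2) * (sinh (a * t) * sinh (b * t))))
      t :=
  hasDerivAt_exp_mul_mul b (hasDerivAt_sinhWronskian a b t)

lemma deriv_deriv_exp_mul_mul_sinhWronskian (a b t : ℝ) :
    deriv (deriv fun t => exp (b * t) * sinhWronskian a b t) t =
      a ^ 2 * (exp (b * t) * sinhWronskian a b t) +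
        2 * b * (b ^ 2 - a ^ 2) * exp (2 * b * t) * sinh (a * t) := by
  refine (deriv_deriv_eq_of_hasDerivAt (hasDerivAt_exp_mul_mul_sinhWronskian a b)
    (fun t => hasDerivAt_exp_mul_mul b (((hasDerivAt_sinhWronskian a b t).const_mul b).add
      ((hasDerivAt_sinh_mul_mul_sinh_mul a b t).const_mul _))) t).trans ?_
  rw [show 2 * b * t = b * t + b * t by ring, exp_add, ← cosh_add_sinh (b * t)]
  simp only [sinhWronskian]
  ring

/-- The coefficients `f₀, f₂` of the second-order (in `φ`) expansion of the solution of
`f'' = (c₁² + c₂ φ² e^{2λt}) f`, `f(0)=0`, `f'(0)=1`: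
`f₀'' = c₁² f₀`, `f₀(0)=0`, `f₀'(0)=1`, and `f₂'' = c₁² f₂ + 2 c₂ e^{2λt} f₀`,
`f₂(0)=f₂'(0)=0`, with the stated explicit solutions. -/
theorem f0_f2_ode (lam c₁ c₂ : ℝ) (hc₁ : 0 < c₁) (hlt : c₁ < lam) :
    let f₀ : ℝ → ℝ := fun t => sinh (c₁ * t) / c₁
    let f₂ : ℝ → ℝ := fun t =>
      c₂ * Real.exp (lam * t) / (lam * c₁ * (lam ^ 2 - c₁ ^ 2)) *
        (lam * sinh (c₁ * t) * cosh (lam * t) - c₁ * cosh (c₁ * t) * sinh (lam * t))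
    (∀ t, deriv (deriv f₀) t = c₁ ^ 2 * f₀ t) ∧ f₀ 0 = 0 ∧ deriv f₀ 0 = 1 ∧
      (∀ t, deriv (deriv f₂) t =
        c₁ ^ 2 * f₂ t + 2 * c₂ * Real.exp (2 * lam * t) * f₀ t) ∧
      f₂ 0 = 0 ∧ deriv f₂ 0 = 0 := by
  intro f₀ f₂
  have hc : c₁ ≠ 0 := hc₁.ne'
  have hlam : lam ≠ 0 := (hc₁.trans hlt).ne'
  have hgap : lam ^ 2 - c₁ ^ 2 ≠ 0 := by nlinarith
  have hf₀ (t : ℝ) : HasDerivAt f₀ (cosh (c₁ * t)) t :=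
    ((hasDerivAt_sinh_mul c₁ t).div_const c₁).congr_deriv (by field_simp)
  have hf₀' (t : ℝ) : HasDerivAt (fun t => cosh (c₁ * t)) (c₁ ^ 2 * f₀ t) t :=
    (hasDerivAt_cosh_mul c₁ t).congr_deriv (by simp only [f₀]; field_simp)
  set K := c₂ / (lam * c₁ * (lam ^ 2 - c₁ ^ 2))
  have hf₂ : f₂ = fun t => K * (exp (lam * t) * sinhWronskian c₁ lam t) := by
    ext t
    simp only [f₂, K, sinhWronskian]
    ring
  refine ⟨deriv_deriv_eq_of_hasDerivAt hf₀ hf₀', by simp [f₀], (hf₀ 0).deriv.trans (by simp),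
    fun t => ?_, by simp [f₂], ?_⟩
  · rw [hf₂, deriv_const_mul_field', deriv_const_mul_field,
      deriv_deriv_exp_mul_mul_sinhWronskian]
    simp only [f₀, K]
    field_simp
  · rw [hf₂, deriv_const_mul_field, (hasDerivAt_exp_mul_mul_sinhWronskian c₁ lam 0).deriv]
    simp [sinhWronskian]
end

section
/- Let λ > 0, φ ∈ ℝ, and let Φ(t) be a smooth real function. Suppose the 2×2 matrix function w(t) satisfies w'' + aΦ J w' + (a/2) Φ' J w − (λ²/4)(1 + Φ²) w = 0 with w(0) = 0, w'(0) = I₂, where J = [[0,1],[−1,0]] and a ∈ ℝ. Then z(t) := exp((a/2) (∫₀ᵗ Φ ds) J) · w(t) satisfies z'' = (1/4)(λ² + (λ² − a²)Φ²) z, z(0) = 0, z'(0) = I₂; moreover z(t) is a scalar multiple of I₂ for each t (i.e. z(t) = y(t) I₂ where y solves the scalar ODE y'' = (1/4)(λ² + (λ² − a²)Φ²) y, y(0)=0, y'(0)=1), and det w(t) = det z(t) = y(t)². -/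
open Real

noncomputable section
namespace GaugeAux

attribute [local instance] Matrix.linftyOpNormedRing Matrix.linftyOpNormedAlgebra

lemma hJ2 : (!![0, 1; -1, 0] : Matrix (Fin 2) (Fin 2) ℝ) * !![0, 1; -1, 0] = -1 := by
  ext i j
  fin_cases i <;> fin_cases j <;>
    simp [Matrix.mul_apply, Fin.sum_univ_two, Matrix.one_apply]

lemma expJ (θ : ℝ) :
    NormedSpace.exp (θ • (!![0, 1; -1, 0] : Matrix (Fin 2) (Fin 2) ℝ)) =
      Real.cos θ • (1 : Matrix (Fin 2) (Fin 2) ℝ) + Real.sin θ • !![0, 1; -1, 0] := by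
  set f := Complex.liftAux (!![0, 1; -1, 0] : Matrix (Fin 2) (Fin 2) ℝ) hJ2 with hfdef
  have hc : Continuous f := f.toLinearMap.continuous_of_finiteDimensional
  have h1 : θ • (!![0, 1; -1, 0] : Matrix (Fin 2) (Fin 2) ℝ) = f ((θ : ℂ) * Complex.I) := by
    simp [hfdef, Complex.liftAux_apply]
  have h2 : NormedSpace.exp ((θ : ℂ) * Complex.I) = Complex.exp ((θ : ℂ) * Complex.I) := by
    rw [Complex.exp_eq_exp_ℂ]
  rw [h1]
  erw [← NormedSpace.map_exp f hc]
  rw [h2, hfdef, Complex.liftAux_apply,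
    Complex.exp_ofReal_mul_I_re, Complex.exp_ofReal_mul_I_im, Algebra.algebraMap_eq_smul_one]

lemma zero_of_ode_nonneg (c u u' : ℝ → ℝ) (hc : Continuous c)
    (hu : ∀ t, HasDerivAt u (u' t) t) (hu' : ∀ t, HasDerivAt u' (c t * u t) t)
    (h0 : u 0 = 0) (h0' : u' 0 = 0) {t : ℝ} (ht : 0 ≤ t) : u t = 0 := by
  obtain ⟨M, hM⟩ := (isCompact_Icc (a := (0:ℝ)) (b := t)).exists_bound_of_continuousOn
    hc.continuousOn
  set K := max 1 M with hK
  set f : ℝ → ℝ × ℝ := fun s => (u s, u' s) with hfd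
  have hf : ∀ s, HasDerivAt f (u' s, c s * u s) s := fun s => (hu s).prodMk (hu' s)
  have key := norm_le_gronwallBound_of_norm_deriv_right_le
    (f := f) (f' := fun s => (u' s, c s * u s)) (δ := 0) (K := K) (ε := 0) (a := 0) (b := t)
    (fun s _ => (hf s).continuousAt.continuousWithinAt)
    (fun s _ => (hf s).hasDerivWithinAt)
    (by simp [hfd, h0, h0', Prod.norm_def]) ?_ t (by simp [ht])
  · rw [gronwallBound_ε0, zero_mul] at key
    have : f t = 0 := by rwa [norm_le_zero_iff] at key
    have := congrArg Prod.fst this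
    simpa [hfd] using this
  · intro s hs
    have hs' : s ∈ Set.Icc 0 t := ⟨hs.1, hs.2.le⟩
    have h1 : ‖f s‖ = max |u s| |u' s| := by simp [hfd, Prod.norm_def]
    have h2 : ‖(u' s, c s * u s)‖ = max |u' s| (|c s| * |u s|) := by
      simp [Prod.norm_def, abs_mul]
    rw [h1, h2, add_zero]
    have hMK : M ≤ K := le_max_right _ _
    have h1K : (1:ℝ) ≤ K := le_max_left _ _
    have habs : |c s| ≤ M := hM s hs'
    have hub : |u s| ≤ max |u s| |u' s| := le_max_left _ _
    have hub' : |u' s| ≤ max |u s| |u' s| := le_max_right _ _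
    have hmn : (0:ℝ) ≤ max |u s| |u' s| := le_trans (abs_nonneg _) hub
    apply max_le
    · nlinarith
    · nlinarith [abs_nonneg (u s), abs_nonneg (c s)]

lemma zero_of_ode (c u u' : ℝ → ℝ) (hc : Continuous c)
    (hu : ∀ t, HasDerivAt u (u' t) t) (hu' : ∀ t, HasDerivAt u' (c t * u t) t)
    (h0 : u 0 = 0) (h0' : u' 0 = 0) (t : ℝ) : u t = 0 := by
  rcases le_or_gt 0 t with ht | ht
  · exact zero_of_ode_nonneg c u u' hc hu hu' h0 h0' ht
  · have hneg : ∀ s : ℝ, HasDerivAt (fun x : ℝ => -x) (-1 : ℝ) s := fun s => hasDerivAt_neg s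
    have hu2 : ∀ s, HasDerivAt (fun x => u (-x)) (-(u' (-s))) s := by
      intro s
      have := (hu (-s)).comp s (hneg s)
      refine this.congr_deriv ?_; ring
    have hu2' : ∀ s, HasDerivAt (fun x => -(u' (-x)))
        ((c ∘ Neg.neg) s * (fun x => u (-x)) s) s := by
      intro s
      have := ((hu' (-s)).comp s (hneg s)).neg
      refine this.congr_deriv ?_; simp [Function.comp]
    have := zero_of_ode_nonneg (c ∘ Neg.neg) (fun x => u (-x)) (fun x => -(u' (-x)))
      (hc.comp continuous_neg) hu2 hu2' (by simpa using h0) (by simpa using h0')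
      (t := -t) (by linarith)
    simpa using this

/-- first derivative of `cos (g s) * p s + sin (g s) * q s` -/
lemma col_deriv (a : ℝ) (Φ g p q p' q' : ℝ → ℝ)
    (hg : ∀ t, HasDerivAt g (a / 2 * Φ t) t)
    (hp : ∀ t, HasDerivAt p (p' t) t) (hq : ∀ t, HasDerivAt q (q' t) t) (t : ℝ) :
    HasDerivAt (fun s => Real.cos (g s) * p s + Real.sin (g s) * q s)
      (Real.cos (g t) * p' t + Real.sin (g t) * q' t
        + a / 2 * Φ t * (Real.cos (g t) * q t - Real.sin (g t) * p t)) t := by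
  have h1 : HasDerivAt (fun s => Real.cos (g s)) (-Real.sin (g t) * (a / 2 * Φ t)) t :=
    (Real.hasDerivAt_cos (g t)).comp t (hg t)
  have h2 : HasDerivAt (fun s => Real.sin (g s)) (Real.cos (g t) * (a / 2 * Φ t)) t :=
    (Real.hasDerivAt_sin (g t)).comp t (hg t)
  have h := (h1.mul (hp t)).add (h2.mul (hq t))
  refine h.congr_deriv ?_
  ring

/-- second derivative: the gauge-transformed column satisfies `F'' = c F`. -/
lemma col_deriv2 (lam a : ℝ) (Φ Φ' g p q p' q' p'' q'' : ℝ → ℝ)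
    (hg : ∀ t, HasDerivAt g (a / 2 * Φ t) t)
    (hΦ : ∀ t, HasDerivAt Φ (Φ' t) t)
    (hp : ∀ t, HasDerivAt p (p' t) t) (hq : ∀ t, HasDerivAt q (q' t) t)
    (hp' : ∀ t, HasDerivAt p' (p'' t) t) (hq' : ∀ t, HasDerivAt q' (q'' t) t)
    (hpq : ∀ t, p'' t = -(a * Φ t) * q' t - a / 2 * Φ' t * q t
      + lam ^ 2 / 4 * (1 + Φ t ^ 2) * p t)
    (hqp : ∀ t, q'' t = a * Φ t * p' t + a / 2 * Φ' t * p t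
      + lam ^ 2 / 4 * (1 + Φ t ^ 2) * q t) (t : ℝ) :
    HasDerivAt (fun s => Real.cos (g s) * p' s + Real.sin (g s) * q' s
        + a / 2 * Φ s * (Real.cos (g s) * q s - Real.sin (g s) * p s))
      (1 / 4 * (lam ^ 2 + (lam ^ 2 - a ^ 2) * Φ t ^ 2)
        * (Real.cos (g t) * p t + Real.sin (g t) * q t)) t := by
  have h1 := col_deriv a Φ g p' q' p'' q'' hg hp' hq' t
  have hG := col_deriv a Φ g q (fun s => -p s) q' (fun s => -p' s) hg hq
    (fun s => (hp s).neg) t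
  have hmul : HasDerivAt (fun s => a / 2 * Φ s) (a / 2 * Φ' t) t := by
    simpa using (hΦ t).const_mul (a / 2)
  have h2 := hmul.mul hG
  have h := h1.add h2
  have hfun : (fun s => Real.cos (g s) * p' s + Real.sin (g s) * q' s
        + a / 2 * Φ s * (Real.cos (g s) * q s - Real.sin (g s) * p s))
      = fun s => (Real.cos (g s) * p' s + Real.sin (g s) * q' s)
        + a / 2 * Φ s * (Real.cos (g s) * q s + Real.sin (g s) * (-p s)) := by
    funext s; ring
  rw [hfun]
  refine h.congr_deriv ?_
  rw [hpq t, hqp t]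
  ring

end GaugeAux
end

open GaugeAux in
/-- Gauge transformation of the 2×2 matrix Jacobi equation: if
`w'' + aΦ J w' + (a/2) Φ' J w − (λ²/4)(1 + Φ²) w = 0`, `w(0) = 0`, `w'(0) = I₂`,
then `z(t) = exp((a/2)(∫₀ᵗ Φ) J) w(t)` satisfies `z'' = ¼(λ² + (λ² − a²)Φ²) z`,
`z(0) = 0`, `z'(0) = I₂`, is a scalar multiple `y(t) I₂` of the identity with `y`
solving the scalar ODE, and `det w = det z = y²`. -/
theorem gauge_transform_matrix_jacobi (lam a : ℝ) (hlam : 0 < lam)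
    (Φ : ℝ → ℝ) (hΦ : ContDiff ℝ (⊤ : ℕ∞) Φ)
    (w w' w'' : ℝ → Matrix (Fin 2) (Fin 2) ℝ)
    (hw : ∀ (i j : Fin 2) (t : ℝ), HasDerivAt (fun s => w s i j) (w' t i j) t)
    (hw' : ∀ (i j : Fin 2) (t : ℝ), HasDerivAt (fun s => w' s i j) (w'' t i j) t)
    (hODE : ∀ t : ℝ,
      w'' t + (a * Φ t) • (!![0, 1; -1, 0] * w' t) +
          (a / 2 * deriv Φ t) • (!![0, 1; -1, 0] * w t) -
        (lam ^ 2 / 4 * (1 + Φ t ^ 2)) • w t = 0)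
    (hw0 : w 0 = 0) (hw'0 : w' 0 = 1) :
    let z : ℝ → Matrix (Fin 2) (Fin 2) ℝ := fun t =>
      NormedSpace.exp
          ((a / 2 * ∫ s in (0:ℝ)..t, Φ s) • (!![0, 1; -1, 0] : Matrix (Fin 2) (Fin 2) ℝ)) *
        w t
    ∃ y : ℝ → ℝ,
      (∀ t, z t = y t • (1 : Matrix (Fin 2) (Fin 2) ℝ)) ∧
      y 0 = 0 ∧ deriv y 0 = 1 ∧
      (∀ t, deriv (deriv y) t = 1 / 4 * (lam ^ 2 + (lam ^ 2 - a ^ 2) * Φ t ^ 2) * y t) ∧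
      z 0 = 0 ∧
      (∀ i j : Fin 2, deriv (fun s => z s i j) 0 = (1 : Matrix (Fin 2) (Fin 2) ℝ) i j) ∧
      (∀ (i j : Fin 2) (t : ℝ), deriv (deriv fun s => z s i j) t =
        1 / 4 * (lam ^ 2 + (lam ^ 2 - a ^ 2) * Φ t ^ 2) * z t i j) ∧
      (∀ t, (w t).det = y t ^ 2) ∧ (∀ t, (w t).det = (z t).det) := by
  intro z
  set g : ℝ → ℝ := fun t => a / 2 * ∫ s in (0:ℝ)..t, Φ s with hgdef
  have hΦc : Continuous Φ := hΦ.continuous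
  have hΦd : ∀ t, HasDerivAt Φ (deriv Φ t) t := fun t =>
    ((hΦ.differentiable (by simp)) t).hasDerivAt
  have hg : ∀ t, HasDerivAt g (a / 2 * Φ t) t := fun t =>
    ((hΦc.integral_hasStrictDerivAt 0 t).hasDerivAt.const_mul (a / 2))
  have hg0 : g 0 = 0 := by simp [hgdef]
  have hcont : Continuous fun t => 1 / 4 * (lam ^ 2 + (lam ^ 2 - a ^ 2) * Φ t ^ 2) := by
    fun_prop
  have hw0e : ∀ i j, w 0 i j = 0 := fun i j => by rw [hw0]; rfl
  have hw'0e : ∀ i j, w' 0 i j = (1 : Matrix (Fin 2) (Fin 2) ℝ) i j := fun i j => by rw [hw'0]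
  -- entrywise ODE
  have hE0 : ∀ (j : Fin 2) (t : ℝ), w'' t 0 j = -(a * Φ t) * w' t 1 j
      - a / 2 * deriv Φ t * w t 1 j + lam ^ 2 / 4 * (1 + Φ t ^ 2) * w t 0 j := by
    intro j t
    have h := congrFun (congrFun (hODE t) 0) j
    simp [Matrix.add_apply, Matrix.sub_apply, Matrix.smul_apply, Matrix.mul_apply,
      Matrix.vecMul, dotProduct, Fin.sum_univ_two] at h
    linarith
  have hE1 : ∀ (j : Fin 2) (t : ℝ), w'' t 1 j = a * Φ t * w' t 0 j
      + a / 2 * deriv Φ t * w t 0 j + lam ^ 2 / 4 * (1 + Φ t ^ 2) * w t 1 j := by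
    intro j t
    have h := congrFun (congrFun (hODE t) 1) j
    simp [Matrix.add_apply, Matrix.sub_apply, Matrix.smul_apply, Matrix.mul_apply,
      Matrix.vecMul, dotProduct, Fin.sum_univ_two] at h
    linarith
  -- the entry functions of z
  have hA : ∀ (j : Fin 2) (t : ℝ),
      HasDerivAt (fun s => Real.cos (g s) * w s 0 j + Real.sin (g s) * w s 1 j)
        (Real.cos (g t) * w' t 0 j + Real.sin (g t) * w' t 1 j
          + a / 2 * Φ t * (Real.cos (g t) * w t 1 j - Real.sin (g t) * w t 0 j)) t :=
    fun j t => col_deriv a Φ g _ _ _ _ hg (hw 0 j) (hw 1 j) t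
  have hA' : ∀ (j : Fin 2) (t : ℝ),
      HasDerivAt (fun s => Real.cos (g s) * w' s 0 j + Real.sin (g s) * w' s 1 j
          + a / 2 * Φ s * (Real.cos (g s) * w s 1 j - Real.sin (g s) * w s 0 j))
        (1 / 4 * (lam ^ 2 + (lam ^ 2 - a ^ 2) * Φ t ^ 2)
          * (Real.cos (g t) * w t 0 j + Real.sin (g t) * w t 1 j)) t :=
    fun j t => col_deriv2 lam a Φ (deriv Φ) g _ _ _ _ _ _ hg hΦd (hw 0 j) (hw 1 j)
      (hw' 0 j) (hw' 1 j) (hE0 j) (hE1 j) t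
  have hB : ∀ (j : Fin 2) (t : ℝ),
      HasDerivAt (fun s => Real.cos (g s) * w s 1 j + Real.sin (g s) * (-(w s 0 j)))
        (Real.cos (g t) * w' t 1 j + Real.sin (g t) * (-(w' t 0 j))
          + a / 2 * Φ t * (Real.cos (g t) * (-(w t 0 j)) - Real.sin (g t) * w t 1 j)) t :=
    fun j t => col_deriv a Φ g _ _ _ _ hg (hw 1 j) (fun s => (hw 0 j s).neg) t
  have hB' : ∀ (j : Fin 2) (t : ℝ),
      HasDerivAt (fun s => Real.cos (g s) * w' s 1 j + Real.sin (g s) * (-(w' s 0 j))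
          + a / 2 * Φ s * (Real.cos (g s) * (-(w s 0 j)) - Real.sin (g s) * w s 1 j))
        (1 / 4 * (lam ^ 2 + (lam ^ 2 - a ^ 2) * Φ t ^ 2)
          * (Real.cos (g t) * w t 1 j + Real.sin (g t) * (-(w t 0 j)))) t := by
    intro j t
    refine col_deriv2 lam a Φ (deriv Φ) g _ _ _ _
      (fun s => w'' s 1 j) (fun s => -(w'' s 0 j)) hg hΦd (hw 1 j)
      (fun s => (hw 0 j s).neg) (hw' 1 j) (fun s => (hw' 0 j s).neg) ?_ ?_ t
    · intro t; show w'' t 1 j = _; rw [hE1 j t]; simp only [Pi.neg_apply]; ring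
    · intro t; show -(w'' t 0 j) = _; rw [hE0 j t]; simp only [Pi.neg_apply]; ring
  -- z entrywise
  have hzA : ∀ (j : Fin 2) (t : ℝ),
      z t 0 j = Real.cos (g t) * w t 0 j + Real.sin (g t) * w t 1 j := by
    intro j t
    show (NormedSpace.exp (g t • (!![0, 1; -1, 0] : Matrix (Fin 2) (Fin 2) ℝ)) * w t) 0 j = _
    rw [GaugeAux.expJ]
    simp [Matrix.mul_apply, Matrix.add_apply, Matrix.smul_apply, Matrix.one_apply,
      Fin.sum_univ_two]
  have hzB : ∀ (j : Fin 2) (t : ℝ),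
      z t 1 j = Real.cos (g t) * w t 1 j + Real.sin (g t) * (-(w t 0 j)) := by
    intro j t
    show (NormedSpace.exp (g t • (!![0, 1; -1, 0] : Matrix (Fin 2) (Fin 2) ℝ)) * w t) 1 j = _
    rw [GaugeAux.expJ]
    simp [Matrix.mul_apply, Matrix.add_apply, Matrix.smul_apply, Matrix.one_apply,
      Fin.sum_univ_two]
    ring
  set y : ℝ → ℝ := fun t => Real.cos (g t) * w t 0 0 + Real.sin (g t) * w t 1 0 with hydef
  -- off-diagonal and diagonal identities via uniqueness
  have hz01 : ∀ t, Real.cos (g t) * w t 0 1 + Real.sin (g t) * w t 1 1 = 0 := by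
    refine zero_of_ode _ _ _ hcont (hA 1) (hA' 1) ?_ ?_
    · simp [hw0e]
    · simp [hg0, hw0e, hw'0e, Matrix.one_apply]
  have hz10 : ∀ t, Real.cos (g t) * w t 1 0 + Real.sin (g t) * (-(w t 0 0)) = 0 := by
    refine zero_of_ode _ _ _ hcont (hB 0) (hB' 0) ?_ ?_
    · simp [hw0e]
    · simp [hg0, hw0e, hw'0e, Matrix.one_apply]
  have hz11 : ∀ t, (Real.cos (g t) * w t 1 1 + Real.sin (g t) * (-(w t 0 1))) - y t = 0 := by
    refine zero_of_ode _ _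
      (fun t => (Real.cos (g t) * w' t 1 1 + Real.sin (g t) * (-(w' t 0 1))
          + a / 2 * Φ t * (Real.cos (g t) * (-(w t 0 1)) - Real.sin (g t) * w t 1 1))
        - (Real.cos (g t) * w' t 0 0 + Real.sin (g t) * w' t 1 0
          + a / 2 * Φ t * (Real.cos (g t) * w t 1 0 - Real.sin (g t) * w t 0 0)))
      hcont (fun t => (hB 1 t).sub (hA 0 t)) ?_ ?_ ?_
    · intro t
      have h := ((hB' 1 t).sub (hA' 0 t))
      refine h.congr_deriv ?_
      ring
    · simp [hw0e, hydef]
    · simp [hg0, hw0e, hw'0e, Matrix.one_apply]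
  have hzy : ∀ t, z t = y t • (1 : Matrix (Fin 2) (Fin 2) ℝ) := by
    intro t
    ext i j
    fin_cases i <;> fin_cases j
    · show z t 0 0 = (y t • (1 : Matrix (Fin 2) (Fin 2) ℝ)) 0 0
      rw [hzA 0 t]; simp [hydef, Matrix.smul_apply, Matrix.one_apply]
    · show z t 0 1 = (y t • (1 : Matrix (Fin 2) (Fin 2) ℝ)) 0 1
      rw [hzA 1 t, hz01 t]; simp [Matrix.smul_apply, Matrix.one_apply]
    · show z t 1 0 = (y t • (1 : Matrix (Fin 2) (Fin 2) ℝ)) 1 0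
      rw [hzB 0 t, hz10 t]; simp [Matrix.smul_apply, Matrix.one_apply]
    · show z t 1 1 = (y t • (1 : Matrix (Fin 2) (Fin 2) ℝ)) 1 1
      rw [hzB 1 t]
      have := hz11 t
      have h2 : Real.cos (g t) * w t 1 1 + Real.sin (g t) * (-(w t 0 1)) = y t := by linarith
      rw [h2]; simp [Matrix.smul_apply, Matrix.one_apply]
  have hy0 : y 0 = 0 := by simp [hydef, hw0e]
  have hyderiv : deriv y = fun t => Real.cos (g t) * w' t 0 0 + Real.sin (g t) * w' t 1 0
      + a / 2 * Φ t * (Real.cos (g t) * w t 1 0 - Real.sin (g t) * w t 0 0) :=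
    funext fun t => (hA 0 t).deriv
  have hy'0 : deriv y 0 = 1 := by
    rw [hyderiv]
    simp [hg0, hw0e, hw'0e, Matrix.one_apply]
  have hy'' : ∀ t, deriv (deriv y) t
      = 1 / 4 * (lam ^ 2 + (lam ^ 2 - a ^ 2) * Φ t ^ 2) * y t := by
    intro t
    rw [hyderiv]
    exact (hA' 0 t).deriv
  have hz0 : z 0 = 0 := by
    ext i j
    fin_cases i <;> fin_cases j
    · show z 0 0 0 = (0 : Matrix (Fin 2) (Fin 2) ℝ) 0 0
      rw [hzA 0 0]; simp [hw0e]
    · show z 0 0 1 = (0 : Matrix (Fin 2) (Fin 2) ℝ) 0 1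
      rw [hzA 1 0]; simp [hw0e]
    · show z 0 1 0 = (0 : Matrix (Fin 2) (Fin 2) ℝ) 1 0
      rw [hzB 0 0]; simp [hw0e]
    · show z 0 1 1 = (0 : Matrix (Fin 2) (Fin 2) ℝ) 1 1
      rw [hzB 1 0]; simp [hw0e]
  have hdet : ∀ t, (w t).det = (z t).det := by
    intro t
    have hz : z t = (Real.cos (g t) • (1 : Matrix (Fin 2) (Fin 2) ℝ)
        + Real.sin (g t) • !![0, 1; -1, 0]) * w t := by
      show (NormedSpace.exp (g t • (!![0, 1; -1, 0] : Matrix (Fin 2) (Fin 2) ℝ)) * w t) = _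
      rw [GaugeAux.expJ]
    have hdE : (Real.cos (g t) • (1 : Matrix (Fin 2) (Fin 2) ℝ)
        + Real.sin (g t) • !![0, 1; -1, 0]).det = 1 := by
      rw [Matrix.det_fin_two]
      simp [Matrix.add_apply, Matrix.smul_apply, Matrix.one_apply]
      nlinarith [Real.sin_sq_add_cos_sq (g t)]
    rw [hz, Matrix.det_mul, hdE, one_mul]
  have hdety : ∀ t, (w t).det = y t ^ 2 := by
    intro t
    rw [hdet t, hzy t, Matrix.det_smul, Matrix.det_one]
    simp
  refine ⟨y, hzy, hy0, hy'0, hy'', hz0, ?_, ?_, hdety, hdet⟩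
  · intro i j
    fin_cases i <;> fin_cases j
    · show deriv (fun s => z s 0 0) 0 = (1 : Matrix (Fin 2) (Fin 2) ℝ) 0 0
      rw [funext fun s => hzA 0 s, (hA 0 0).deriv]
      simp [hg0, hw0e, hw'0e, Matrix.one_apply]
    · show deriv (fun s => z s 0 1) 0 = (1 : Matrix (Fin 2) (Fin 2) ℝ) 0 1
      rw [funext fun s => hzA 1 s, (hA 1 0).deriv]
      simp [hg0, hw0e, hw'0e, Matrix.one_apply]
    · show deriv (fun s => z s 1 0) 0 = (1 : Matrix (Fin 2) (Fin 2) ℝ) 1 0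
      rw [funext fun s => hzB 0 s, (hB 0 0).deriv]
      simp [hg0, hw0e, hw'0e, Matrix.one_apply]
    · show deriv (fun s => z s 1 1) 0 = (1 : Matrix (Fin 2) (Fin 2) ℝ) 1 1
      rw [funext fun s => hzB 1 s, (hB 1 0).deriv]
      simp [hg0, hw0e, hw'0e, Matrix.one_apply]
  · intro i j t
    fin_cases i <;> fin_cases j
    · show deriv (deriv fun s => z s 0 0) t = _ * z t 0 0
      rw [funext fun s => hzA 0 s, funext fun s => (hA 0 s).deriv, (hA' 0 t).deriv, hzA 0 t]
    · show deriv (deriv fun s => z s 0 1) t = _ * z t 0 1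
      rw [funext fun s => hzA 1 s, funext fun s => (hA 1 s).deriv, (hA' 1 t).deriv, hzA 1 t]
    · show deriv (deriv fun s => z s 1 0) t = _ * z t 1 0
      rw [funext fun s => hzB 0 s, funext fun s => (hB 0 s).deriv, (hB' 0 t).deriv, hzB 0 t]
    · show deriv (deriv fun s => z s 1 1) t = _ * z t 1 1
      rw [funext fun s => hzB 1 s, funext fun s => (hB 1 s).deriv, (hB' 1 t).deriv, hzB 1 t]
end
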